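/- arXiv:2012.12130 — 3 statements merged into one kernel-verified Lean document; each statement's English description precedes it below -/
import Mathlib

section
/- Let γ ≥ 0 and suppose S ≥ 0. Then Z ≤ γ if and only if (1 + γ²/n)·S² − γ²·Q ≤ 0. (Case 1 of the feasibility reformulation of the minimization Z-test.) -/
lemma div_le_iff_sq_le_mul_sq {a b c : ℝ} (ha : 0 ≤ a) (hb : 0 < b) (hc : 0 ≤ c) :
    a / b ≤ c ↔ a ^ 2 ≤ c ^ 2 * b ^ 2 := by
  rw [div_le_iff₀ hb, ← mul_pow]
  exact (pow_le_pow_iff_left₀ ha (by positivity) two_ne_zero).symm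

lemma sq_sqrt_mul_sqrt_variance {n S Q : ℝ} (hn : 0 < n) (hvar : 0 ≤ Q / n - (S / n) ^ 2) :
    (Real.sqrt n * Real.sqrt (Q / n - (S / n) ^ 2)) ^ 2 = Q - S ^ 2 / n := by
  rw [mul_pow, Real.sq_sqrt hn.le, Real.sq_sqrt hvar]
  field_simp

theorem stmt_0_general (n : ℕ) (hn : 1 ≤ n)
    (S Q σ Z : ℝ)
    (hσ : σ = Real.sqrt (Q / n - (S / n) ^ 2)) (hσpos : 0 < σ)
    (hZ : Z = S / (Real.sqrt n * σ))
    (γ : ℝ) (hγ : 0 ≤ γ) (hSpos : 0 ≤ S) :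
    Z ≤ γ ↔ (1 + γ ^ 2 / n) * S ^ 2 - γ ^ 2 * Q ≤ 0 := by
  have hn0 : (0 : ℝ) < n := by exact_mod_cast hn
  have hvar : 0 < Q / n - (S / n) ^ 2 := Real.sqrt_pos.mp (hσ ▸ hσpos)
  rw [hZ, div_le_iff_sq_le_mul_sq hSpos (by positivity) hγ, hσ,
    sq_sqrt_mul_sqrt_variance hn0 hvar.le]
  have hexpand : (1 + γ ^ 2 / n) * S ^ 2 - γ ^ 2 * Q = S ^ 2 - γ ^ 2 * (Q - S ^ 2 / n) := by
    ring
  rw [hexpand, sub_nonpos]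

theorem stmt_0 (n : ℕ) (hn : 1 ≤ n) (t : Fin n → ℝ)
    (S Q σ Z : ℝ)
    (hS : S = ∑ k, t k) (hQ : Q = ∑ k, (t k) ^ 2)
    (hσ : σ = Real.sqrt (Q / n - (S / n) ^ 2)) (hσpos : 0 < σ)
    (hZ : Z = S / (Real.sqrt n * σ))
    (γ : ℝ) (hγ : 0 ≤ γ) (hSpos : 0 ≤ S) :
    Z ≤ γ ↔ (1 + γ ^ 2 / n) * S ^ 2 - γ ^ 2 * Q ≤ 0 :=
  stmt_0_general n hn S Q σ Z hσ hσpos hZ γ hγ hSpos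
end

section
/- For γ ≥ 0: Z ≤ γ if and only if either S ≤ 0, or both S ≥ 0 and (1 + γ²/n)·S² ≤ γ²·Q. (Combined correctness of the feasibility reformulation of the minimization Z-test for nonnegative γ.) -/
/-!
Since `n σ̂² = Q - S²/n`, clearing the positive denominator turns `Z ≤ γ` into
`S ≤ γ √(Q - S²/n)`. For `S ≤ 0` this holds trivially; for `S ≥ 0` both sides are nonnegative,
so it is equivalent to the squared inequality `S² ≤ γ² (Q - S²/n)`, i.e. `(1 + γ²/n) S² ≤ γ² Q`.
-/

theorem le_iff_nonpos_or_sq_le {R : Type*} [Ring R] [LinearOrder R] [IsStrictOrderedRing R]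
    {a b : R} (hb : 0 ≤ b) : a ≤ b ↔ a ≤ 0 ∨ (0 ≤ a ∧ a ^ 2 ≤ b ^ 2) := by
  constructor
  · intro h
    rcases le_total a 0 with ha | ha
    · exact Or.inl ha
    · exact Or.inr ⟨ha, (sq_le_sq₀ ha hb).2 h⟩
  · rintro (ha | ⟨ha, h⟩)
    · exact ha.trans hb
    · exact (sq_le_sq₀ ha hb).1 h

theorem sq_sqrt_mul_sqrt_sub_sq_div {n Q S : ℝ} (hn : 0 < n) (h : 0 ≤ Q / n - (S / n) ^ 2) :
    (√n * √(Q / n - (S / n) ^ 2)) ^ 2 = Q - S ^ 2 / n := by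
  rw [mul_pow, Real.sq_sqrt hn.le, Real.sq_sqrt h]
  field_simp

theorem sq_le_mul_sub_div_iff {K : Type*} [Field K] [LinearOrder K] [IsStrictOrderedRing K]
    (n Q S γ : K) : S ^ 2 ≤ γ ^ 2 * (Q - S ^ 2 / n) ↔ (1 + γ ^ 2 / n) * S ^ 2 ≤ γ ^ 2 * Q := by
  rw [← sub_nonneg, ← sub_nonneg (a := γ ^ 2 * Q)]
  ring_nf

theorem stmt_9_general (n : ℕ) (hn : 1 ≤ n)
    (S Q σ Z : ℝ)
    (hσ : σ = Real.sqrt (Q / n - (S / n) ^ 2)) (hσpos : 0 < σ)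
    (hZ : Z = S / (Real.sqrt n * σ))
    (γ : ℝ) (hγ : 0 ≤ γ) :
    Z ≤ γ ↔ (S ≤ 0 ∨ (0 ≤ S ∧ (1 + γ ^ 2 / n) * S ^ 2 ≤ γ ^ 2 * Q)) := by
  subst hσ hZ
  have hn0 : (0 : ℝ) < n := by exact_mod_cast hn
  have hvar := sq_sqrt_mul_sqrt_sub_sq_div (S := S) hn0 (Real.sqrt_pos.1 hσpos).le
  rw [div_le_iff₀ (by positivity), le_iff_nonpos_or_sq_le (by positivity), mul_pow, hvar,
    sq_le_mul_sub_div_iff]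

theorem stmt_9 (n : ℕ) (hn : 1 ≤ n) (t : Fin n → ℝ)
    (S Q σ Z : ℝ)
    (hS : S = ∑ k, t k) (hQ : Q = ∑ k, (t k) ^ 2)
    (hσ : σ = Real.sqrt (Q / n - (S / n) ^ 2)) (hσpos : 0 < σ)
    (hZ : Z = S / (Real.sqrt n * σ))
    (γ : ℝ) (hγ : 0 ≤ γ) :
    Z ≤ γ ↔ (S ≤ 0 ∨ (0 ≤ S ∧ (1 + γ ^ 2 / n) * S ^ 2 ≤ γ ^ 2 * Q)) :=
  stmt_9_general n hn S Q σ Z hσ hσpos hZ γ hγ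
end

section
/- For γ < 0: Z ≤ γ if and only if S ≤ 0 and (1 + γ²/n)·S² ≥ γ²·Q. (Combined correctness of the feasibility reformulation of the minimization Z-test for negative γ.) -/
theorem stmt_10 (n : ℕ) (hn : 1 ≤ n) (t : Fin n → ℝ)
    (S Q σ Z : ℝ)
    (hS : S = ∑ k, t k) (hQ : Q = ∑ k, (t k) ^ 2)
    (hσ : σ = Real.sqrt (Q / n - (S / n) ^ 2)) (hσpos : 0 < σ)
    (hZ : Z = S / (Real.sqrt n * σ))
    (γ : ℝ) (hγ : γ < 0) :
    Z ≤ γ ↔ (S ≤ 0 ∧ γ ^ 2 * Q ≤ (1 + γ ^ 2 / n) * S ^ 2) := by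
  have hn' : (0:ℝ) < n := by exact_mod_cast hn
  have hD : 0 < Q / n - (S / n) ^ 2 := by
    by_contra h
    push_neg at h
    rw [hσ, Real.sqrt_eq_zero'.mpr h] at hσpos
    exact lt_irrefl 0 hσpos
  have hσ2 : σ ^ 2 = Q / n - (S / n) ^ 2 := by
    rw [hσ, Real.sq_sqrt hD.le]
  have hQn : Q = n * σ ^ 2 + S ^ 2 / n := by
    rw [hσ2]
    field_simp
    ring
  have hsn : 0 < Real.sqrt n := Real.sqrt_pos.mpr hn'
  have hsn2 : (Real.sqrt n) ^ 2 = n := Real.sq_sqrt hn'.le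
  have hprod : 0 < Real.sqrt n * σ := mul_pos hsn hσpos
  set A := Real.sqrt n * σ with hA
  have hneg : γ * A < 0 := mul_neg_of_neg_of_pos hγ hprod
  have hApow : (γ * A) ^ 2 = γ ^ 2 * ((n:ℝ) * σ ^ 2) := by
    rw [hA, mul_pow, mul_pow, hsn2]
  have e1 : γ ^ 2 * ((n:ℝ) * σ ^ 2 + S ^ 2 / n)
      = γ ^ 2 * ((n:ℝ) * σ ^ 2) + γ ^ 2 * S ^ 2 / n := by ring
  have e2 : (1 + γ ^ 2 / n) * S ^ 2 = S ^ 2 + γ ^ 2 * S ^ 2 / n := by ring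
  rw [hZ, div_le_iff₀ hprod]
  constructor
  · intro h
    have hS0 : S ≤ 0 := h.trans hneg.le
    refine ⟨hS0, ?_⟩
    have hsq : (γ * A) ^ 2 ≤ S ^ 2 := by
      have h1 : -(γ * A) ≤ -S := by linarith
      have h2 : (-(γ * A)) ^ 2 ≤ (-S) ^ 2 :=
        pow_le_pow_left₀ (by linarith) h1 2
      simpa using h2
    rw [hApow] at hsq
    rw [hQn, e1, e2]
    linarith
  · rintro ⟨hS0, hineq⟩
    rw [hQn, e1, e2] at hineq
    have hsq : (γ * A) ^ 2 ≤ S ^ 2 := by rw [hApow]; linarith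
    have h1 : -(γ * A) ≤ -S := by
      have h2 : (-(γ * A)) ^ 2 ≤ (-S) ^ 2 := by simpa using hsq
      exact (pow_le_pow_iff_left₀ (by linarith) (by linarith) (by norm_num)).mp h2
    linarith
end
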